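/- Let μ = 0.9, ω = 0.0001, η = 0.1 in the SGD-with-momentum coefficient recurrences, and define tilde hyper-parameters by η̃ = η(μ + 2 − ηω), ω̃ = (μω + 2ω − ηω²)/(μ + 2 − ηω), and μ̃ = −b_5^φ/η̃ + η̃ω̃ − 2, where b_5^φ is the coefficient from the original dynamics. Then the coefficient b̃_4^φ generated by the tilde dynamics is not equal to b_7^φ of the original dynamics. Consequently, two-step multi-step estimation using SGD with momentum cannot be realized by one-step SGD with momentum with any choice of hyper-parameters. -/
import Mathlib


/-- Coefficient pair (b_t^v, b_t^φ) of SGD with momentum with constant gradient,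
indexed so that `bCoeff μ ω η k` gives the coefficients at time t = k + 1:
b₁^v = b₁^φ = 0, b_{t+1}^v = μ b_t^v + 1 + ω b_t^φ,
b_{t+1}^φ = −ημ b_t^v − η + (1 − ηω) b_t^φ. -/
def bCoeff (μ ω η : ℝ) : ℕ → ℝ × ℝ
  | 0 => (0, 0)
  | k + 1 =>
      let p := bCoeff μ ω η k
      (μ * p.1 + 1 + ω * p.2, -η * μ * p.1 - η + (1 - η * ω) * p.2)

/-- `bPhi μ ω η t` is the coefficient b_t^φ. -/
def bPhi (μ ω η : ℝ) (t : ℕ) : ℝ := (bCoeff μ ω η (t - 1)).2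

/-- With μ = 0.9, ω = 0.0001, η = 0.1 and tilde hyper-parameters
η̃ = η(μ + 2 − ηω), ω̃ = (μω + 2ω − ηω²)/(μ + 2 − ηω),
μ̃ = −b₅^φ/η̃ + η̃ω̃ − 2, the coefficient b̃₄^φ of the tilde dynamics is NOT equal to
b₇^φ of the original dynamics: two-step multi-step estimation with SGD with momentum
cannot be realized by one-step SGD with momentum. -/
theorem multi_step_not_one_step :
    let μ : ℝ := 0.9
    let ω : ℝ := 0.0001
    let η : ℝ := 0.1
    let ηt : ℝ := η * (μ + 2 - η * ω)
    let ωt : ℝ := (μ * ω + 2 * ω - η * ω ^ 2) / (μ + 2 - η * ω)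
    let μt : ℝ := -(bPhi μ ω η 5) / ηt + ηt * ωt - 2
    bPhi μt ωt ηt 4 ≠ bPhi μ ω η 7 := by
  simp only [bPhi, bCoeff]
  norm_num
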